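/- For every complex number q with |q| < 1 (with values of q making any denominator factor 1 + q^j vanish excluded), ∑_{m≥1, n≥0} q^{2m+n} (q^3; q^3)_{m−1} (−q; q)_m (−q; q)_{m+n−1}^2 (q; q)_{m+n} / [ (q; q)_{m−1} (−q^3; q^3)_m (q^3; q^3)_{m+n} ] = (1/6)·(−q; q)_∞^3 / (−q^3; q^3)_∞ − (1/2)·(−q; q)_∞ (q^2; q^2)_∞ / (q^3; q^3)_∞ + 1/3. -/

import Mathlib

open Finset Filter Topology

/-!
Put `u n = (q³;q³)ₙ (-q;q)ₙ / ((q;q)ₙ (-q³;q³)ₙ)`, `w n = (-q;q)ₙ³ / (-q³;q³)ₙ`,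
`x n = (-q;q)ₙ² (q;q)ₙ / (q³;q³)ₙ` and `y K = (-q;q)_K² (q;q)_{K+1} / (q³;q³)_{K+1}`.
The summand of index `(m, n)` is `q^(m+n) y (m+n-1) (u m - u (m-1)) / 2`, so along the
antidiagonal `m + n = K + 1` the sum telescopes to `q^(K+1) y K (u (K+1) - 1) / 2`.
Since `q^(K+1) y K = x (K+1) - x K` and `q^(K+1) y K u (K+1) = (w (K+1) - w K) / 3`, the
antidiagonal sums telescope in `K` as well, to `(w N / 6 - x N / 2) - (1/6 - 1/2)`; let `N → ∞`
and use `(-q;q)∞ (q;q)∞ = (q²;q²)∞`. The double series converges absolutely because `u` and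
`y` converge, hence are bounded.
-/

/-- Finite q-Pochhammer symbol `(a; q)_n = ∏_{j=0}^{n-1} (1 - a q^j)`. -/
noncomputable def qPoch (q a : ℂ) (n : ℕ) : ℂ := ∏ j ∈ Finset.range n, (1 - a * q ^ j)

/-- Infinite q-Pochhammer symbol `(a; q)_∞ = ∏_{j=0}^{∞} (1 - a q^j)`. -/
noncomputable def qPochInf (q a : ℂ) : ℂ := ∏' j : ℕ, (1 - a * q ^ j)

@[simp] lemma qPoch_zero (q a : ℂ) : qPoch q a 0 = 1 := prod_range_zero _

lemma qPoch_succ (q a : ℂ) (n : ℕ) : qPoch q a (n + 1) = qPoch q a n * (1 - a * q ^ n) :=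
  prod_range_succ _ _

lemma one_sub_mul_pow_ne_zero {Q a : ℂ} (hQ : ‖Q‖ ≤ 1) (ha : ‖a‖ < 1) (j : ℕ) :
    1 - a * Q ^ j ≠ 0 := by
  have hlt : ‖a * Q ^ j‖ < 1 := by
    rw [norm_mul, norm_pow]
    exact (mul_le_of_le_one_right (norm_nonneg a) (pow_le_one₀ (norm_nonneg Q) hQ)).trans_lt ha
  exact sub_ne_zero.2 fun h => by simp [← h] at hlt

lemma one_add_mul_pow_ne_zero {Q a : ℂ} (hQ : ‖Q‖ ≤ 1) (ha : ‖a‖ < 1) (j : ℕ) :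
    1 + a * Q ^ j ≠ 0 := by
  simpa using one_sub_mul_pow_ne_zero hQ (by rwa [norm_neg] : ‖-a‖ < 1) j

lemma qPoch_ne_zero {Q a : ℂ} (hQ : ‖Q‖ ≤ 1) (ha : ‖a‖ < 1) (n : ℕ) :
    qPoch Q a n ≠ 0 :=
  prod_ne_zero_iff.2 fun j _ => one_sub_mul_pow_ne_zero hQ ha j

lemma summable_norm_mul_pow (a : ℂ) {Q : ℂ} (hQ : ‖Q‖ < 1) :
    Summable fun j : ℕ => ‖-(a * Q ^ j)‖ := by
  simpa [norm_mul, norm_pow] using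
    (summable_geometric_of_lt_one (norm_nonneg Q) hQ).mul_left ‖a‖

lemma tendsto_qPoch (a : ℂ) {Q : ℂ} (hQ : ‖Q‖ < 1) :
    Tendsto (qPoch Q a) atTop (𝓝 (qPochInf Q a)) := by
  have : Multipliable fun j : ℕ => 1 - a * Q ^ j := by
    simpa [sub_eq_add_neg] using multipliable_one_add_of_summable (summable_norm_mul_pow a hQ)
  exact this.hasProd.tendsto_prod_nat

lemma qPochInf_ne_zero {Q a : ℂ} (hQ : ‖Q‖ < 1) (ha : ‖a‖ < 1) : qPochInf Q a ≠ 0 := by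
  simpa [qPochInf, sub_eq_add_neg] using tprod_one_add_ne_zero_of_summable
    (by simpa [← sub_eq_add_neg] using one_sub_mul_pow_ne_zero hQ.le ha)
    (summable_norm_mul_pow a hQ)

lemma qPoch_neg_mul_qPoch (q : ℂ) (n : ℕ) :
    qPoch q (-q) n * qPoch q q n = qPoch (q ^ 2) (q ^ 2) n := by
  simp only [qPoch, ← prod_mul_distrib]
  exact prod_congr rfl fun j _ => by ring

lemma norm_pow_lt_one {q : ℂ} (hq : ‖q‖ < 1) {k : ℕ} (hk : k ≠ 0) : ‖q ^ k‖ < 1 := by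
  rw [norm_pow]
  exact pow_lt_one₀ (norm_nonneg q) hq hk

lemma qPochInf_neg_mul_qPochInf {q : ℂ} (hq : ‖q‖ < 1) :
    qPochInf q (-q) * qPochInf q q = qPochInf (q ^ 2) (q ^ 2) := by
  refine tendsto_nhds_unique ((tendsto_qPoch _ hq).mul (tendsto_qPoch _ hq)) ?_
  simpa only [qPoch_neg_mul_qPoch] using tendsto_qPoch (q ^ 2) (norm_pow_lt_one hq two_ne_zero)

lemma Filter.Tendsto.exists_forall_norm_le {E : Type*} [SeminormedAddCommGroup E] {f : ℕ → E}
    {l : E} (h : Tendsto f atTop (𝓝 l)) : ∃ C, ∀ n, ‖f n‖ ≤ C :=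
  let ⟨C, hC⟩ := h.norm.bddAbove_range
  ⟨C, fun n => hC ⟨n, rfl⟩⟩

theorem HasSum.sum_antidiagonal {α : Type*} [AddCommGroup α] [TopologicalSpace α]
    [IsTopologicalAddGroup α] [T3Space α] {f : ℕ × ℕ → α} {S : α} (h : HasSum f S) :
    HasSum (fun n => ∑ p ∈ antidiagonal n, f p) S :=
  (HasAntidiagonal.sigmaAntidiagonalEquivProd.hasSum_iff.2 h).sigma fun n =>
    (antidiagonal n).hasSum f

theorem HasSum.eq_sub_of_tendsto {α : Type*} [AddCommGroup α] [TopologicalSpace α]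
    [IsTopologicalAddGroup α] [T2Space α] {s : ℕ → α} {S L : α}
    (h : HasSum (fun n => s (n + 1) - s n) S) (hs : Tendsto s atTop (𝓝 L)) : S = L - s 0 :=
  tendsto_nhds_unique h.tendsto_sum_nat <| by
    simpa only [sum_range_sub] using hs.sub_const (s 0)

namespace DS2

variable (q : ℂ)

noncomputable def term (p : ℕ × ℕ) : ℂ :=
  q ^ (2 * (p.1 + 1) + p.2) * qPoch (q ^ 3) (q ^ 3) p.1 * qPoch q (-q) (p.1 + 1) *
    (qPoch q (-q) (p.1 + p.2)) ^ 2 * qPoch q q (p.1 + 1 + p.2) /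
  (qPoch q q p.1 * qPoch (q ^ 3) (-q ^ 3) (p.1 + 1) *
    qPoch (q ^ 3) (q ^ 3) (p.1 + 1 + p.2))

noncomputable def u (n : ℕ) : ℂ :=
  qPoch (q ^ 3) (q ^ 3) n * qPoch q (-q) n / (qPoch q q n * qPoch (q ^ 3) (-q ^ 3) n)

noncomputable def w (n : ℕ) : ℂ := qPoch q (-q) n ^ 3 / qPoch (q ^ 3) (-q ^ 3) n

noncomputable def x (n : ℕ) : ℂ := qPoch q (-q) n ^ 2 * qPoch q q n / qPoch (q ^ 3) (q ^ 3) n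

noncomputable def y (n : ℕ) : ℂ :=
  qPoch q (-q) n ^ 2 * qPoch q q (n + 1) / qPoch (q ^ 3) (q ^ 3) (n + 1)

variable {q}

lemma term_eq_mul_sub_u (hq : ‖q‖ < 1) (a b : ℕ) :
    term q (a, b) = q ^ (a + b + 1) * y q (a + b) * (u q (a + 1) - u q a) / 2 := by
  have hq3 := norm_pow_lt_one hq three_ne_zero
  simp only [term, u, y, qPoch_succ, neg_mul, sub_neg_eq_add,
    show a + 1 + b = a + b + 1 by omega]
  field_simp [qPoch_ne_zero hq.le hq a, qPoch_ne_zero hq3.le hq3 (a + b),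
    one_sub_mul_pow_ne_zero hq.le hq a, one_add_mul_pow_ne_zero hq3.le hq3 a,
    one_sub_mul_pow_ne_zero hq3.le hq3 (a + b)]
  ring

lemma pow_mul_y_mul_u_succ (hq : ‖q‖ < 1) (n : ℕ) :
    q ^ (n + 1) * y q n * u q (n + 1) = (w q (n + 1) - w q n) / 3 := by
  have hq3 := norm_pow_lt_one hq three_ne_zero
  simp only [w, u, y, qPoch_succ, neg_mul, sub_neg_eq_add]
  field_simp [qPoch_ne_zero hq.le hq n, qPoch_ne_zero hq3.le hq3 n,
    one_sub_mul_pow_ne_zero hq.le hq n, one_add_mul_pow_ne_zero hq3.le hq3 n,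
    one_sub_mul_pow_ne_zero hq3.le hq3 n]
  ring

lemma pow_mul_y_eq_x_sub (hq : ‖q‖ < 1) (n : ℕ) :
    q ^ (n + 1) * y q n = x q (n + 1) - x q n := by
  have hq3 := norm_pow_lt_one hq three_ne_zero
  simp only [x, y, qPoch_succ]
  field_simp [qPoch_ne_zero hq3.le hq3 n, one_sub_mul_pow_ne_zero hq3.le hq3 n]
  ring

lemma sum_antidiagonal_term (hq : ‖q‖ < 1) (K : ℕ) :
    ∑ p ∈ antidiagonal K, term q p =
      (w q (K + 1) / 6 - x q (K + 1) / 2) - (w q K / 6 - x q K / 2) := by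
  set c := q ^ (K + 1) * y q K
  have hterm : ∀ a ∈ range (K + 1),
      term q (a, K - a) = c * u q (a + 1) / 2 - c * u q a / 2 := by
    intro a ha
    rw [term_eq_mul_sub_u hq, Nat.add_sub_cancel' (Nat.le_of_lt_succ (mem_range.1 ha))]
    ring
  rw [Nat.sum_antidiagonal_eq_sum_range_succ_mk, sum_congr rfl hterm,
    sum_range_sub (fun a => c * u q a / 2), show u q 0 = 1 by simp [u], mul_one]
  linear_combination pow_mul_y_mul_u_succ hq K / 2 - pow_mul_y_eq_x_sub hq K / 2

lemma tendsto_u (hq : ‖q‖ < 1) : Tendsto (u q) atTop (𝓝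
    (qPochInf (q ^ 3) (q ^ 3) * qPochInf q (-q) / (qPochInf q q * qPochInf (q ^ 3) (-q ^ 3)))) :=
  have hq3 := norm_pow_lt_one hq three_ne_zero
  ((tendsto_qPoch _ hq3).mul (tendsto_qPoch _ hq)).div
    ((tendsto_qPoch _ hq).mul (tendsto_qPoch _ hq3))
    (mul_ne_zero (qPochInf_ne_zero hq hq) (qPochInf_ne_zero hq3 (by rwa [norm_neg])))

lemma tendsto_w (hq : ‖q‖ < 1) :
    Tendsto (w q) atTop (𝓝 (qPochInf q (-q) ^ 3 / qPochInf (q ^ 3) (-q ^ 3))) :=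
  have hq3 := norm_pow_lt_one hq three_ne_zero
  ((tendsto_qPoch _ hq).pow 3).div (tendsto_qPoch _ hq3)
    (qPochInf_ne_zero hq3 (by rwa [norm_neg]))

lemma tendsto_x (hq : ‖q‖ < 1) : Tendsto (x q) atTop
    (𝓝 (qPochInf q (-q) ^ 2 * qPochInf q q / qPochInf (q ^ 3) (q ^ 3))) :=
  have hq3 := norm_pow_lt_one hq three_ne_zero
  (((tendsto_qPoch _ hq).pow 2).mul (tendsto_qPoch _ hq)).div (tendsto_qPoch _ hq3)
    (qPochInf_ne_zero hq3 hq3)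

lemma tendsto_y (hq : ‖q‖ < 1) : Tendsto (y q) atTop
    (𝓝 (qPochInf q (-q) ^ 2 * qPochInf q q / qPochInf (q ^ 3) (q ^ 3))) :=
  have hq3 := norm_pow_lt_one hq three_ne_zero
  (((tendsto_qPoch _ hq).pow 2).mul ((tendsto_qPoch _ hq).comp (tendsto_add_atTop_nat 1))).div
    ((tendsto_qPoch _ hq3).comp (tendsto_add_atTop_nat 1)) (qPochInf_ne_zero hq3 hq3)

lemma summable_term (hq : ‖q‖ < 1) : Summable (term q) := by
  obtain ⟨Cu, hCu⟩ := (tendsto_u hq).exists_forall_norm_le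
  obtain ⟨Cy, hCy⟩ := (tendsto_y hq).exists_forall_norm_le
  have hgeom := summable_geometric_of_lt_one (norm_nonneg q) hq
  refine Summable.of_norm_bounded ((hgeom.mul_of_nonneg hgeom (fun _ => by positivity)
    (fun _ => by positivity)).mul_left (Cy * Cu)) fun ⟨a, b⟩ => ?_
  have hqab : ‖q ^ (a + b + 1)‖ ≤ ‖q‖ ^ a * ‖q‖ ^ b := by
    rw [norm_pow, ← pow_add]
    exact pow_le_pow_of_le_one (norm_nonneg q) hq.le (Nat.le_succ _)
  have hu : ‖u q (a + 1) - u q a‖ ≤ 2 * Cu :=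
    (norm_sub_le _ _).trans (by linarith [hCu (a + 1), hCu a])
  rw [term_eq_mul_sub_u hq, norm_div, norm_mul, norm_mul, Complex.norm_two]
  calc ‖q ^ (a + b + 1)‖ * ‖y q (a + b)‖ * ‖u q (a + 1) - u q a‖ / 2
      ≤ (‖q‖ ^ a * ‖q‖ ^ b) * Cy * (2 * Cu) / 2 := by
        gcongr
        · exact mul_nonneg (by positivity) ((norm_nonneg _).trans (hCy 0))
        · exact hCy _
    _ = Cy * Cu * (‖q‖ ^ a * ‖q‖ ^ b) := by ring

end DS2

/- The double sum is over `m ≥ 1, n ≥ 0`, encoded by `m = p.1 + 1`, `n = p.2`. -/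
theorem thmDS2_c (q : ℂ) (hq : ‖q‖ < 1) :
    ∑' p : ℕ × ℕ,
      q ^ (2 * (p.1 + 1) + p.2) * qPoch (q ^ 3) (q ^ 3) p.1 * qPoch q (-q) (p.1 + 1) *
        (qPoch q (-q) (p.1 + p.2)) ^ 2 * qPoch q q (p.1 + 1 + p.2) /
      (qPoch q q p.1 * qPoch (q ^ 3) (-q ^ 3) (p.1 + 1) *
        qPoch (q ^ 3) (q ^ 3) (p.1 + 1 + p.2))
    = (1 / 6) * (qPochInf q (-q)) ^ 3 / qPochInf (q ^ 3) (-q ^ 3)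
      - (1 / 2) * (qPochInf q (-q) * qPochInf (q ^ 2) (q ^ 2)) / qPochInf (q ^ 3) (q ^ 3)
      + 1 / 3 := by
  have hdiag : HasSum (fun K => (DS2.w q (K + 1) / 6 - DS2.x q (K + 1) / 2) -
      (DS2.w q K / 6 - DS2.x q K / 2)) (∑' p, DS2.term q p) := by
    simpa only [DS2.sum_antidiagonal_term hq] using (DS2.summable_term hq).hasSum.sum_antidiagonal
  have hlim := hdiag.eq_sub_of_tendsto (s := fun K => DS2.w q K / 6 - DS2.x q K / 2)
    (((DS2.tendsto_w hq).div_const 6).sub ((DS2.tendsto_x hq).div_const 2))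
  change ∑' p, DS2.term q p = _
  rw [hlim, ← qPochInf_neg_mul_qPochInf hq]
  simp only [DS2.w, DS2.x, qPoch_zero]
  ring
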